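/- Let a, b, c, d, e be complex numbers with a not an integer and e not a nonpositive integer, and extend the Pochhammer symbol by (a)_{-j} = 1/(a-j)_j. Then for all natural numbers m, n: (a)_{m-n}(b)_m(c)_n(d)_n/((e)_m m! n!) = ((a)_m(b)_m/((e)_m m!)) · ((-1)^n (c)_n (d)_n/((1-a)_n n!)) + ∑_{k=1}^{m} ∑_{l=1}^{min(k,n)} (-1)^{k+l} ((k-1)!/((l-1)! l! (k-l)!)) · ((b)_k (c)_l (d)_l/((1-a)_l (e)_k)) · ((a+k)_{m-k}(b+k)_{m-k}/((e+k)_{m-k}(m-k)!)) · ((-1)^{n-l}(c+l)_{n-l}(d+l)_{n-l}/((1-a+l)_{n-l}(n-l)!)). -/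

import Mathlib

/-!
Split every Pochhammer symbol of the `(k, l)`-summand at `k` and `l`: with
`P = (-1)^n (b)_m (c)_n (d)_n / ((e)_m (1-a)_n m! n!)` the summand becomes
`P · (-1)^k C(m,k) (a+k)_{m-k} · k! C(k-1,l-1) C(n,l)`. By Vandermonde's identity the sum over
`l` of `k! C(k-1,l-1) C(n,l)` is the rising factorial `(n)_k`, and by Chu–Vandermonde the sum
over `k`, with the first term as the summand `k = 0`, is `(a-n)_m`. It remains to note that
`(a)_{m-n} = (a-n)_m / (a-n)_n` and `(1-a)_n = (-1)^n (a-n)_n`.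
-/

open Finset

/-- Pochhammer symbol (rising factorial): `(a)_k = a (a+1) ⋯ (a+k-1)`. -/
noncomputable def poch (a : ℂ) (k : ℕ) : ℂ := ∏ j ∈ Finset.range k, (a + j)

/-- Generalized Pochhammer symbol for integer index:
`(a)_z` is the usual rising factorial for `z ≥ 0`, and `(a)_{-j} = 1/(a-j)_j`. -/
noncomputable def pochZ (a : ℂ) : ℤ → ℂ
  | Int.ofNat k => poch a k
  | Int.negSucc j => 1 / poch (a - (j + 1 : ℕ)) (j + 1)

open Nat Polynomial

lemma poch_add (x : ℂ) (k j : ℕ) : poch x (k + j) = poch x k * poch (x + k) j := by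
  simp only [poch, prod_range_add, Nat.cast_add, add_assoc]

lemma poch_mul_poch_sub (x : ℂ) {k m : ℕ} (h : k ≤ m) :
    poch x k * poch (x + k) (m - k) = poch x m := by
  rw [← poch_add, Nat.add_sub_cancel' h]

lemma poch_eq_ascPochhammer_eval (x : ℂ) (k : ℕ) : poch x k = (ascPochhammer ℂ k).eval x := by
  induction k with
  | zero => simp [poch]
  | succ k ih => rw [poch, prod_range_succ, ← poch, ih, ascPochhammer_succ_eval]

lemma poch_natCast (n k : ℕ) : poch n k = n.ascFactorial k := by
  rw [poch_eq_ascPochhammer_eval, ascPochhammer_nat_eq_natCast_ascFactorial]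

lemma poch_one_sub (x : ℂ) (n : ℕ) : poch (1 - x) n = (-1) ^ n * poch (x - n) n := by
  rw [poch_eq_ascPochhammer_eval, poch_eq_ascPochhammer_eval, show 1 - x = -(x - 1) by ring,
    ascPochhammer_eval_neg_eq_descPochhammer, descPochhammer_eval_eq_ascPochhammer]
  ring_nf

lemma poch_eq_descPochhammer_smeval (x : ℂ) (k : ℕ) :
    poch x k = (descPochhammer ℤ k).smeval (x + k - 1) := by
  rw [descPochhammer_smeval_eq_ascPochhammer, ascPochhammer_smeval_eq_eval,
    poch_eq_ascPochhammer_eval]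
  ring_nf

-- Chu–Vandermonde: `Ring.descPochhammer_smeval_add` at `-y` and `x + m - 1`.
theorem poch_sub_eq_sum (x y : ℂ) (m : ℕ) :
    poch (x - y) m =
      ∑ k ∈ range (m + 1), (-1) ^ k * m.choose k * poch y k * poch (x + k) (m - k) := by
  have h := Ring.descPochhammer_smeval_add m (Commute.all (-y) (x + m - 1))
  rw [Nat.sum_antidiagonal_eq_sum_range_succ_mk] at h
  rw [poch_eq_descPochhammer_smeval, show x - y + m - 1 = -y + (x + m - 1) by ring, h]
  refine sum_congr rfl fun k hk => ?_
  have hneg := poch_eq_descPochhammer_smeval (1 - (y + k)) k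
  rw [poch_one_sub, show 1 - (y + k) + k - 1 = -y by ring, add_sub_cancel_right] at hneg
  rw [poch_eq_descPochhammer_smeval (x + k), Nat.cast_sub (by simpa [Nat.lt_succ_iff] using hk),
    ← hneg, show x + k + (m - k : ℂ) - 1 = x + m - 1 by ring]
  ring

lemma factorial_mul_sum_choose_mul_choose {k : ℕ} (hk : 1 ≤ k) (n : ℕ) :
    k ! * ∑ l ∈ Icc 1 (min k n), (k - 1).choose (l - 1) * n.choose l = n.ascFactorial k := by
  rw [ascFactorial_eq_factorial_mul_choose', show n + k - 1 = n + (k - 1) by omega,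
    Nat.add_choose_eq,
    Nat.sum_antidiagonal_eq_sum_range_succ (fun i j => n.choose i * (k - 1).choose j)]
  congr 1
  refine sum_subset_zero_on_sdiff (fun l hl => ?_) (fun l hl => ?_) (fun l hl => ?_)
  · simp only [mem_Icc, mem_range] at hl ⊢
    omega
  · simp only [mem_sdiff, mem_Icc, mem_range, le_min_iff, not_and_or, not_le] at hl
    rcases Nat.lt_or_ge n l with hnl | hln
    · rw [Nat.choose_eq_zero_of_lt hnl, zero_mul]
    · rw [Nat.choose_eq_zero_of_lt (by omega : k - 1 < k - l), mul_zero]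
  · simp only [mem_Icc, le_min_iff] at hl
    rw [mul_comm, ← Nat.choose_symm (by omega : l - 1 ≤ k - 1),
      show k - 1 - (l - 1) = k - l by omega]

lemma poch_sub_natCast_self_ne_zero {a : ℂ} (ha : ∀ z : ℤ, a ≠ z) (n : ℕ) :
    poch (a - n) n ≠ 0 :=
  prod_ne_zero_iff.2 fun j _ h => ha (n - j) (by push_cast; linear_combination h)

lemma pochZ_natCast_sub (a : ℂ) (m n : ℕ) (h : poch (a - n) n ≠ 0) :
    pochZ a (m - n) = poch (a - n) m / poch (a - n) n := by
  rcases le_or_gt n m with hnm | hmn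
  · rw [← poch_mul_poch_sub _ hnm, sub_add_cancel, mul_div_cancel_left₀ _ h,
      ← Nat.cast_sub hnm]
    rfl
  · rw [← poch_mul_poch_sub _ hmn.le] at h ⊢
    rw [div_mul_cancel_left₀ (left_ne_zero_of_mul h),
      show (m - n : ℤ) = Int.negSucc (n - m - 1) by omega, pochZ,
      Nat.sub_add_cancel (by omega : 1 ≤ n - m), Nat.cast_sub hmn.le, one_div, sub_add]

lemma H2_summand_eq (a b c d e : ℂ) {m n k l : ℕ} (hl : 1 ≤ l) (hlk : l ≤ k) (hkm : k ≤ m)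
    (hln : l ≤ n) :
    (-1 : ℂ) ^ (k + l) *
        (((k - 1).factorial : ℂ) /
          (((l - 1).factorial : ℂ) * (l.factorial : ℂ) * ((k - l).factorial : ℂ))) *
        (poch b k * poch c l * poch d l / (poch (1 - a) l * poch e k)) *
        (poch (a + k) (m - k) * poch (b + k) (m - k) /
          (poch (e + k) (m - k) * ((m - k).factorial : ℂ))) *
        ((-1 : ℂ) ^ (n - l) * poch (c + l) (n - l) * poch (d + l) (n - l) /
          (poch (1 - a + l) (n - l) * ((n - l).factorial : ℂ))) =
      (-1) ^ n * poch b m * poch c n * poch d n / (poch e m * poch (1 - a) n * m ! * n !) *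
        ((-1) ^ k * m.choose k * poch (a + k) (m - k)) *
        ((k ! * ((k - 1).choose (l - 1) * n.choose l) : ℕ) : ℂ) := by
  have hsign : (-1 : ℂ) ^ n = (-1) ^ l * (-1) ^ (n - l) := by
    rw [← pow_add, Nat.add_sub_cancel' hln]
  have hfac : ((k - 1)! / ((l - 1)! * l ! * (k - l)! * (m - k)! * (n - l)!) : ℂ) =
      m.choose k * ((k ! * ((k - 1).choose (l - 1) * n.choose l) : ℕ) : ℂ) / (m ! * n !) := by
    push_cast
    rw [Nat.cast_choose ℂ hkm, Nat.cast_choose ℂ hln, Nat.cast_choose ℂ (by omega : l - 1 ≤ k - 1),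
      show k - 1 - (l - 1) = k - l by omega]
    have hfact (i : ℕ) : (i ! : ℂ) ≠ 0 := Nat.cast_ne_zero.2 i.factorial_ne_zero
    field_simp [hfact]
  rw [← poch_mul_poch_sub b hkm, ← poch_mul_poch_sub e hkm, ← poch_mul_poch_sub c hln,
    ← poch_mul_poch_sub d hln, ← poch_mul_poch_sub (1 - a) hln, hsign]
  generalize poch b k = B₁, poch (b + k) (m - k) = B₂, poch c l = C₁, poch (c + l) (n - l) = C₂,
    poch d l = D₁, poch (d + l) (n - l) = D₂, poch e k = E₁, poch (e + k) (m - k) = E₂,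
    poch (1 - a) l = A₁, poch (1 - a + l) (n - l) = A₂, poch (a + k) (m - k) = A₃
  linear_combination (-1) ^ k * (-1) ^ l * (-1) ^ (n - l) * B₁ * B₂ * C₁ * C₂ * D₁ * D₂ * A₃ /
    (A₁ * A₂ * E₁ * E₂) * hfac

theorem H2_decomposition_general (a b c d e : ℂ) (ha : ∀ z : ℤ, a ≠ (z : ℂ)) (m n : ℕ) :
    pochZ a ((m : ℤ) - n) * poch b m * poch c n * poch d n /
        (poch e m * (m.factorial : ℂ) * (n.factorial : ℂ)) =
      poch a m * poch b m / (poch e m * (m.factorial : ℂ)) *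
          ((-1 : ℂ) ^ n * poch c n * poch d n / (poch (1 - a) n * (n.factorial : ℂ))) +
        ∑ k ∈ Finset.Icc 1 m, ∑ l ∈ Finset.Icc 1 (min k n),
          (-1 : ℂ) ^ (k + l) *
            (((k - 1).factorial : ℂ) /
              (((l - 1).factorial : ℂ) * (l.factorial : ℂ) * ((k - l).factorial : ℂ))) *
            (poch b k * poch c l * poch d l / (poch (1 - a) l * poch e k)) *
            (poch (a + k) (m - k) * poch (b + k) (m - k) /
              (poch (e + k) (m - k) * ((m - k).factorial : ℂ))) *
            ((-1 : ℂ) ^ (n - l) * poch (c + l) (n - l) * poch (d + l) (n - l) /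
              (poch (1 - a + l) (n - l) * ((n - l).factorial : ℂ))) := by
  set P := (-1) ^ n * poch b m * poch c n * poch d n / (poch e m * poch (1 - a) n * m ! * n !)
    with hP
  have hlhs : pochZ a ((m : ℤ) - n) * poch b m * poch c n * poch d n / (poch e m * m ! * n !) =
      P * poch (a - n) m := by
    rw [pochZ_natCast_sub a m n (poch_sub_natCast_self_ne_zero ha n), hP, poch_one_sub]
    field_simp
  rw [hlhs, poch_sub_eq_sum, sum_range_eq_add_Ico _ (by omega : 0 < m + 1),
    Ico_add_one_right_eq_Icc, mul_add, mul_sum]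
  congr 1
  · simp only [pow_zero, Nat.choose_zero_right, Nat.cast_one, Nat.cast_zero, add_zero,
      Nat.sub_zero, show poch (n : ℂ) 0 = 1 from prod_range_zero _]
    rw [hP]
    ring
  · refine sum_congr rfl fun k hk => ?_
    rw [mem_Icc] at hk
    rw [sum_congr rfl fun l hl => by
        simp only [mem_Icc, le_min_iff] at hl
        exact H2_summand_eq a b c d e hl.1 hl.2.1 hk.2 hl.2.2,
      ← mul_sum, ← Nat.cast_sum, ← mul_sum, factorial_mul_sum_choose_mul_choose hk.1,
      ← poch_natCast]
    ring

/-- Decomposition formula (3.17) for Horn's `H₂`, coefficient of `x^m y^n`. -/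
theorem H2_decomposition (a b c d e : ℂ) (ha : ∀ z : ℤ, a ≠ (z : ℂ))
    (he : ∀ j : ℕ, e ≠ -(j : ℂ)) (m n : ℕ) :
    pochZ a ((m : ℤ) - n) * poch b m * poch c n * poch d n /
        (poch e m * (m.factorial : ℂ) * (n.factorial : ℂ)) =
      poch a m * poch b m / (poch e m * (m.factorial : ℂ)) *
          ((-1 : ℂ) ^ n * poch c n * poch d n / (poch (1 - a) n * (n.factorial : ℂ))) +
        ∑ k ∈ Finset.Icc 1 m, ∑ l ∈ Finset.Icc 1 (min k n),
          (-1 : ℂ) ^ (k + l) *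
            (((k - 1).factorial : ℂ) /
              (((l - 1).factorial : ℂ) * (l.factorial : ℂ) * ((k - l).factorial : ℂ))) *
            (poch b k * poch c l * poch d l / (poch (1 - a) l * poch e k)) *
            (poch (a + k) (m - k) * poch (b + k) (m - k) /
              (poch (e + k) (m - k) * ((m - k).factorial : ℂ))) *
            ((-1 : ℂ) ^ (n - l) * poch (c + l) (n - l) * poch (d + l) (n - l) /
              (poch (1 - a + l) (n - l) * ((n - l).factorial : ℂ))) :=
  H2_decomposition_general a b c d e ha m n
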